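/- arXiv:1507.02821 — 3 statements merged into one kernel-verified Lean document; each statement's English description precedes it below -/
import Mathlib

section
/- Let A ∈ ℂ^{M×N} be a dictionary with coherence μ_A and let x ∈ ℂ^N be nonzero. Then ‖A^H A x‖_∞ ≤ (1 + μ_A(δ(x) − 1)) · ‖x‖_∞. -/
open Matrix

/-- The δ-density of a vector `x ∈ ℂ^N`: the ratio of its ℓ¹-norm to its ℓ∞-norm
(the norm on `Fin N → ℂ` is the sup-norm); for `x = 0` this is `0/0 = 0`. -/
noncomputable def density {N : ℕ} (x : Fin N → ℂ) : ℝ :=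
  (∑ i, ‖x i‖) / ‖x‖

/-- The inner product `a_i^H b_j` between the `i`-th column of `A` and the `j`-th column of `B`. -/
noncomputable def colIP {M Na Nb : ℕ} (A : Matrix (Fin M) (Fin Na) ℂ)
    (B : Matrix (Fin M) (Fin Nb) ℂ) (i : Fin Na) (j : Fin Nb) : ℂ :=
  ∑ m, (starRingEnd ℂ) (A m i) * B m j

/-- A dictionary: all columns have unit Euclidean norm. -/
def UnitColumns {M N : ℕ} (A : Matrix (Fin M) (Fin N) ℂ) : Prop :=
  ∀ j, colIP A A j j = 1

/-- `μ` is the coherence of the dictionary `A`: the maximum of `|a_i^H a_j|` over `i ≠ j`. -/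
def IsCoherence {M N : ℕ} (A : Matrix (Fin M) (Fin N) ℂ) (μ : ℝ) : Prop :=
  IsGreatest {r : ℝ | ∃ i j, i ≠ j ∧ r = ‖colIP A A i j‖} μ

/-- `μ` is the mutual coherence of the dictionaries `A` and `B`:
the maximum of `|a_i^H b_j|` over all `i, j`. -/
def IsMutualCoherence {M Na Nb : ℕ} (A : Matrix (Fin M) (Fin Na) ℂ)
    (B : Matrix (Fin M) (Fin Nb) ℂ) (μ : ℝ) : Prop :=
  IsGreatest {r : ℝ | ∃ i j, r = ‖colIP A B i j‖} μ

/-! Entry `i` of `Aᴴ A x` is `∑ⱼ (a_i^H a_j) x_j`: the diagonal term contributes at most `|x_i|`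
and the others at most `μ (‖x‖₁ - |x_i|)`. Since `μ ≤ 1` by Cauchy–Schwarz, this bound
`(1 - μ) |x_i| + μ ‖x‖₁` is largest when `|x_i| = ‖x‖_∞`. -/

open Finset

section MulVecBound

variable {ι R : Type*} [Fintype ι] [NormedRing R]

lemma norm_mulVec_apply_le {G : Matrix ι ι R} {μ : ℝ} {i : ι} (hdiag : ‖G i i‖ ≤ 1)
    (hoff : ∀ j, i ≠ j → ‖G i j‖ ≤ μ) (x : ι → R) :
    ‖(G *ᵥ x) i‖ ≤ ‖x i‖ + μ * (∑ j, ‖x j‖ - ‖x i‖) := by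
  classical
  have hdiag' : ‖G i i * x i‖ ≤ ‖x i‖ :=
    (norm_mul_le _ _).trans (mul_le_of_le_one_left (norm_nonneg _) hdiag)
  have hrest : ∑ j ∈ univ.erase i, ‖G i j * x j‖ ≤ ∑ j ∈ univ.erase i, μ * ‖x j‖ :=
    sum_le_sum fun j hj => (norm_mul_le _ _).trans <|
      mul_le_mul_of_nonneg_right (hoff j (ne_of_mem_erase hj).symm) (norm_nonneg _)
  have hsum : ∑ j, ‖x j‖ = ‖x i‖ + ∑ j ∈ univ.erase i, ‖x j‖ :=
    (add_sum_erase _ _ (mem_univ i)).symm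
  calc ‖(G *ᵥ x) i‖ ≤ ∑ j, ‖G i j * x j‖ := norm_sum_le _ _
    _ = ‖G i i * x i‖ + ∑ j ∈ univ.erase i, ‖G i j * x j‖ :=
        (add_sum_erase _ _ (mem_univ i)).symm
    _ ≤ ‖x i‖ + μ * (∑ j, ‖x j‖ - ‖x i‖) := by
        rw [hsum, add_sub_cancel_left, mul_sum]
        exact add_le_add hdiag' hrest

lemma norm_mulVec_le {G : Matrix ι ι R} {μ : ℝ} (hdiag : ∀ i, ‖G i i‖ ≤ 1)
    (hoff : ∀ i j, i ≠ j → ‖G i j‖ ≤ μ) (hμ₀ : 0 ≤ μ) (hμ₁ : μ ≤ 1) (x : ι → R) :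
    ‖G *ᵥ x‖ ≤ ‖x‖ + μ * (∑ j, ‖x j‖ - ‖x‖) := by
  have hx_le_sum : ‖x‖ ≤ ∑ j, ‖x j‖ :=
    (pi_norm_le_iff_of_nonneg (sum_nonneg fun j _ => norm_nonneg _)).2 fun i =>
      single_le_sum (fun j _ => norm_nonneg (x j)) (mem_univ i)
  refine (pi_norm_le_iff_of_nonneg (by nlinarith [norm_nonneg x])).2 fun i => ?_
  calc ‖(G *ᵥ x) i‖ ≤ ‖x i‖ + μ * (∑ j, ‖x j‖ - ‖x i‖) :=
        norm_mulVec_apply_le (hdiag i) (hoff i) x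
    _ ≤ ‖x‖ + μ * (∑ j, ‖x j‖ - ‖x‖) := by nlinarith [norm_le_pi_norm x i]

end MulVecBound

lemma density_mul_norm {N : ℕ} (x : Fin N → ℂ) : density x * ‖x‖ = ∑ i, ‖x i‖ := by
  rcases eq_or_ne x 0 with rfl | hx
  · simp
  · exact div_mul_cancel₀ _ (norm_ne_zero_iff.2 hx)

lemma conjTranspose_mul_apply_eq_colIP {M Na Nb : ℕ} (A : Matrix (Fin M) (Fin Na) ℂ)
    (B : Matrix (Fin M) (Fin Nb) ℂ) (i : Fin Na) (j : Fin Nb) :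
    (Aᴴ * B) i j = colIP A B i j := by
  simp [mul_apply, colIP, conjTranspose_apply]

lemma colIP_eq_inner {M Na Nb : ℕ} (A : Matrix (Fin M) (Fin Na) ℂ)
    (B : Matrix (Fin M) (Fin Nb) ℂ) (i : Fin Na) (j : Fin Nb) :
    colIP A B i j = inner ℂ (WithLp.toLp 2 (Aᵀ i)) (WithLp.toLp 2 (Bᵀ j)) := by
  simp [colIP, PiLp.inner_apply, mul_comm]

lemma norm_colIP_le_one {M N : ℕ} {A : Matrix (Fin M) (Fin N) ℂ} (hA : UnitColumns A)
    (i j : Fin N) : ‖colIP A A i j‖ ≤ 1 := by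
  have hcol : ∀ k, ‖WithLp.toLp 2 (Aᵀ k)‖ = 1 := fun k => by
    refine (pow_eq_one_iff_of_nonneg (norm_nonneg _) two_ne_zero).1 ?_
    rw [← inner_self_eq_norm_sq (𝕜 := ℂ), ← colIP_eq_inner, hA k, RCLike.one_re]
  rw [colIP_eq_inner]
  simpa [hcol] using norm_inner_le_norm (𝕜 := ℂ) (WithLp.toLp 2 (Aᵀ i)) (WithLp.toLp 2 (Aᵀ j))

theorem linf_upper_bound_general {M N : ℕ} (A : Matrix (Fin M) (Fin N) ℂ) (μ : ℝ)
    (hA : UnitColumns A) (hμ : IsCoherence A μ) (x : Fin N → ℂ) :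
    ‖(Aᴴ * A).mulVec x‖ ≤ (1 + μ * (density x - 1)) * ‖x‖ := by
  have hdiag : ∀ i, ‖(Aᴴ * A) i i‖ ≤ 1 := fun i => by
    rw [conjTranspose_mul_apply_eq_colIP, hA i, norm_one]
  have hoff : ∀ i j, i ≠ j → ‖(Aᴴ * A) i j‖ ≤ μ := fun i j hij => by
    rw [conjTranspose_mul_apply_eq_colIP]
    exact hμ.2 ⟨i, j, hij, rfl⟩
  obtain ⟨i, j, -, hμ_eq⟩ := hμ.1
  have hμ₀ : 0 ≤ μ := hμ_eq ▸ norm_nonneg _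
  have hμ₁ : μ ≤ 1 := hμ_eq ▸ norm_colIP_le_one hA i j
  calc ‖(Aᴴ * A) *ᵥ x‖ ≤ ‖x‖ + μ * (∑ j, ‖x j‖ - ‖x‖) := norm_mulVec_le hdiag hoff hμ₀ hμ₁ x
    _ = (1 + μ * (density x - 1)) * ‖x‖ := by rw [← density_mul_norm]; ring

theorem linf_upper_bound {M N : ℕ} (A : Matrix (Fin M) (Fin N) ℂ) (μ : ℝ)
    (hA : UnitColumns A) (hμ : IsCoherence A μ) (x : Fin N → ℂ) (hx : x ≠ 0) :
    ‖(Aᴴ * A).mulVec x‖ ≤ (1 + μ * (density x - 1)) * ‖x‖ :=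
  linf_upper_bound_general A μ hA hμ x
end

section
/- Let A ∈ ℂ^{M×N} be a dictionary with coherence μ_A ≠ 0 and let x ∈ ℝ^N be the α-decaying signal with entries x_i = α^{i−1} for i = 1,…,N, where 0 < α < 1 − (1 + 1/μ_A)^{−1}. Then A x ≠ 0, even though x has all N entries nonzero. -/
/-!
Multiplying `A x = 0` by `Aᴴ` and reading off row `j` of the Gram matrix, whose diagonal is `1`,
gives `x_j = -∑_{i ≠ j} (a_jᴴ a_i) x_i`, hence `|x_j| ≤ μ ∑_{i ≠ j} |x_i|` for every kernel vector.
For the α-decaying signal at `j = 0` the left side is `1`, while the tail `∑_{i ≥ 1} α^i` is below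
`1 / (1 - α) - 1 < 1 / μ` by the bound on `α`.
-/

open Matrix

open Finset

lemma colIP_eq_conjTranspose_mul {M Na Nb : ℕ} (A : Matrix (Fin M) (Fin Na) ℂ)
    (B : Matrix (Fin M) (Fin Nb) ℂ) : colIP A B = Aᴴ * B := by
  ext i j
  simp [colIP, mul_apply]

lemma norm_le_mul_sum_erase_of_mulVec_eq_zero {M N : ℕ} {A : Matrix (Fin M) (Fin N) ℂ} {μ : ℝ}
    (hA : UnitColumns A) (hμ : ∀ i j, i ≠ j → ‖colIP A A i j‖ ≤ μ) {x : Fin N → ℂ}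
    (hx : A *ᵥ x = 0) (j : Fin N) :
    ‖x j‖ ≤ μ * ∑ i ∈ univ.erase j, ‖x i‖ := by
  have hgram : ∑ i, colIP A A j i * x i = 0 := by
    have := congrArg (Aᴴ *ᵥ ·) hx
    rw [mulVec_mulVec, ← colIP_eq_conjTranspose_mul, mulVec_zero] at this
    simpa [mulVec, dotProduct] using congrFun this j
  have hxj : x j = -∑ i ∈ univ.erase j, colIP A A j i * x i := by
    rw [← add_sum_erase _ _ (mem_univ j), hA j, one_mul] at hgram
    exact eq_neg_of_add_eq_zero_left hgram
  calc ‖x j‖ ≤ ∑ i ∈ univ.erase j, ‖colIP A A j i * x i‖ := by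
        rw [hxj, norm_neg]; exact norm_sum_le _ _
    _ ≤ ∑ i ∈ univ.erase j, μ * ‖x i‖ := by
        refine sum_le_sum fun i hi => ?_
        rw [norm_mul]
        exact mul_le_mul_of_nonneg_right (hμ j i (ne_of_mem_erase hi).symm) (norm_nonneg _)
    _ = μ * ∑ i ∈ univ.erase j, ‖x i‖ := (mul_sum _ _ _).symm

lemma geom_sum_lt_of_lt_one_sub_inv {α c : ℝ} (hα0 : 0 ≤ α) (hc : 0 < c) (hα : α < 1 - c⁻¹)
    (n : ℕ) : ∑ i ∈ range n, α ^ i < c := by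
  have hsub : c⁻¹ < 1 - α := by linarith
  calc ∑ i ∈ range n, α ^ i ≤ α ^ 0 / (1 - α) := by
        rw [range_eq_Ico]
        exact geom_sum_Ico_le_of_lt_one hα0 (by linarith [inv_pos.2 hc])
    _ < c := by
        rw [pow_zero, one_div]
        exact inv_lt_of_inv_lt₀ hc hsub

theorem kernel_result_alpha_decaying_general {M N : ℕ} (A : Matrix (Fin M) (Fin N) ℂ) (μ : ℝ)
    (hA : UnitColumns A) (hμ : IsCoherence A μ)
    (α : ℝ) (hα0 : 0 < α) (hα1 : α < 1 - (1 + 1 / μ)⁻¹)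
    (x : Fin N → ℂ) (hx : ∀ i : Fin N, x i = ((α ^ (i : ℕ) : ℝ) : ℂ)) :
    A.mulVec x ≠ 0 ∧ ∀ i, x i ≠ 0 := by
  have hnorm : ∀ i, ‖x i‖ = α ^ (i : ℕ) := fun i => by simp [hx, abs_of_pos hα0]
  refine ⟨fun hker => ?_, fun i => norm_ne_zero_iff.1 (by simp [hnorm, hα0.ne'])⟩
  obtain ⟨⟨i₀, _, _, hμ_eq⟩, hμ_max⟩ := hμ
  have hμ_pos : 0 < μ := by
    refine (hμ_eq ▸ norm_nonneg _ : 0 ≤ μ).lt_of_ne' fun hμ0 => ?_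
    -- with `1 / 0 = 0` the bound on `α` reads `α < 0`
    simp only [hμ0, div_zero, add_zero, inv_one, sub_self] at hα1
    linarith
  let j₀ : Fin N := ⟨0, i₀.pos⟩
  have htail : ∑ i ∈ univ.erase j₀, ‖x i‖ < 1 / μ := by
    have hgeom := geom_sum_lt_of_lt_one_sub_inv hα0.le (by positivity) hα1 N
    rw [sum_erase_eq_sub (mem_univ j₀)]
    simp only [hnorm, Fin.sum_univ_eq_sum_range (α ^ ·), j₀, pow_zero]
    linarith
  have := calc (1 : ℝ) = ‖x j₀‖ := by simp [hnorm, j₀]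
    _ ≤ μ * ∑ i ∈ univ.erase j₀, ‖x i‖ := norm_le_mul_sum_erase_of_mulVec_eq_zero hA
        (fun i j hij => hμ_max ⟨i, j, hij, rfl⟩) hker j₀
    _ < μ * (1 / μ) := mul_lt_mul_of_pos_left htail hμ_pos
    _ = 1 := mul_one_div_cancel hμ_pos.ne'
  exact lt_irrefl _ this

theorem kernel_result_alpha_decaying {M N : ℕ} (A : Matrix (Fin M) (Fin N) ℂ) (μ : ℝ)
    (hA : UnitColumns A) (hμ : IsCoherence A μ) (hμ0 : μ ≠ 0)
    (α : ℝ) (hα0 : 0 < α) (hα1 : α < 1 - (1 + 1 / μ)⁻¹)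
    (x : Fin N → ℂ) (hx : ∀ i : Fin N, x i = ((α ^ (i : ℕ) : ℝ) : ℂ)) :
    A.mulVec x ≠ 0 ∧ ∀ i, x i ≠ 0 :=
  kernel_result_alpha_decaying_general A μ hA hμ α hα0 hα1 x hx
end

section
/- (Uncertainty relation) Let A ∈ ℂ^{M×N_a} and B ∈ ℂ^{M×N_b} be dictionaries with coherences μ_A, μ_B and mutual coherence μ_m. Let x ∈ ℂ^{N_a} and z ∈ ℂ^{N_b} be nonzero vectors satisfying A x = B z. Then [1 − μ_A(δ(x) − 1)]⁺ · [1 − μ_B(δ(z) − 1)]⁺ ≤ δ(x) · δ(z) · μ_m², where [u]⁺ := max{u, 0}. -/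
open Matrix

/-
Pick a coordinate `i` where `|x_i| = ‖x‖_∞` and take the `i`-th entry of
`Aᴴ A x = Aᴴ B z`. On the left the diagonal term is `x_i` and the off-diagonal terms have size at
most `μ_A (‖x‖₁ - ‖x‖_∞)`; on the right every term has size at most `μ_m |z_j|`. Dividing by
`‖x‖_∞` gives `[1 - μ_A (δ(x) - 1)]⁺ ≤ μ_m ‖z‖₁ / ‖x‖_∞`, symmetrically with the roles of
`(A, x)` and `(B, z)` exchanged, and the product of the two bounds is `δ(x) δ(z) μ_m²`.
-/

section RowBound

variable {ι κ 𝕜 : Type*} [SeminormedRing 𝕜]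

theorem norm_sum_mul_le_of_norm_le (s : Finset ι) (a y : ι → 𝕜) {c : ℝ}
    (ha : ∀ j ∈ s, ‖a j‖ ≤ c) : ‖∑ j ∈ s, a j * y j‖ ≤ c * ∑ j ∈ s, ‖y j‖ := by
  rw [Finset.mul_sum]
  refine (norm_sum_le _ _).trans (Finset.sum_le_sum fun j hj => ?_)
  exact (norm_mul_le _ _).trans (mul_le_mul_of_nonneg_right (ha j hj) (norm_nonneg _))

variable [Fintype ι] [Fintype κ]

theorem norm_apply_sub_le_of_mulVec_eq [DecidableEq ι] {G : Matrix ι ι 𝕜} {H : Matrix ι κ 𝕜}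
    {μ ν : ℝ} (hdiag : ∀ i, G i i = 1) (hoff : ∀ i j, i ≠ j → ‖G i j‖ ≤ μ)
    (hH : ∀ i j, ‖H i j‖ ≤ ν) {x : ι → 𝕜} {z : κ → 𝕜} (h : G *ᵥ x = H *ᵥ z) (i : ι) :
    ‖x i‖ - μ * ((∑ j, ‖x j‖) - ‖x i‖) ≤ ν * ∑ j, ‖z j‖ := by
  have hrow : x i + ∑ j ∈ Finset.univ.erase i, G i j * x j = (H *ᵥ z) i := by
    rw [← h, mulVec, dotProduct, ← Finset.add_sum_erase _ _ (Finset.mem_univ i), hdiag, one_mul]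
  have hoff_sum : ‖∑ j ∈ Finset.univ.erase i, G i j * x j‖ ≤ μ * ((∑ j, ‖x j‖) - ‖x i‖) := by
    rw [← Finset.sum_erase_eq_sub (Finset.mem_univ i)]
    exact norm_sum_mul_le_of_norm_le _ _ _ fun j hj => hoff i j (Finset.ne_of_mem_erase hj).symm
  have hH_sum : ‖(H *ᵥ z) i‖ ≤ ν * ∑ j, ‖z j‖ :=
    norm_sum_mul_le_of_norm_le _ _ _ fun j _ => hH i j
  have hxi := norm_sub_le (x i + ∑ j ∈ Finset.univ.erase i, G i j * x j)
    (∑ j ∈ Finset.univ.erase i, G i j * x j)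
  rw [add_sub_cancel_right, hrow] at hxi
  linarith

theorem norm_sub_le_of_mulVec_eq [DecidableEq ι] {G : Matrix ι ι 𝕜} {H : Matrix ι κ 𝕜}
    {μ ν : ℝ} (hdiag : ∀ i, G i i = 1) (hoff : ∀ i j, i ≠ j → ‖G i j‖ ≤ μ)
    (hH : ∀ i j, ‖H i j‖ ≤ ν) {x : ι → 𝕜} {z : κ → 𝕜} (h : G *ᵥ x = H *ᵥ z) (hx : x ≠ 0) :
    ‖x‖ - μ * ((∑ j, ‖x j‖) - ‖x‖) ≤ ν * ∑ j, ‖z j‖ := by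
  have : Nonempty ι := not_isEmpty_iff.mp fun _ => hx (Subsingleton.elim _ _)
  obtain ⟨i, hi⟩ := (IsGreatest.pi_norm x).1
  rw [← hi]
  exact norm_apply_sub_le_of_mulVec_eq hdiag hoff hH h i

end RowBound

theorem colIP_eq_conjTranspose_mul_apply {M Na Nb : ℕ} (A : Matrix (Fin M) (Fin Na) ℂ)
    (B : Matrix (Fin M) (Fin Nb) ℂ) (i : Fin Na) (j : Fin Nb) : colIP A B i j = (Aᴴ * B) i j :=
  rfl

theorem norm_colIP_comm {M Na Nb : ℕ} (A : Matrix (Fin M) (Fin Na) ℂ)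
    (B : Matrix (Fin M) (Fin Nb) ℂ) (i : Fin Na) (j : Fin Nb) :
    ‖colIP B A j i‖ = ‖colIP A B i j‖ := by
  rw [colIP_eq_conjTranspose_mul_apply, colIP_eq_conjTranspose_mul_apply,
    ← conjTranspose_conjTranspose A, ← conjTranspose_mul, conjTranspose_apply, norm_star,
    conjTranspose_conjTranspose]

theorem IsCoherence.norm_colIP_le {M N : ℕ} {A : Matrix (Fin M) (Fin N) ℂ} {μ : ℝ}
    (h : IsCoherence A μ) {i j : Fin N} (hij : i ≠ j) : ‖colIP A A i j‖ ≤ μ :=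
  h.2 ⟨i, j, hij, rfl⟩

theorem IsMutualCoherence.norm_colIP_le {M Na Nb : ℕ} {A : Matrix (Fin M) (Fin Na) ℂ}
    {B : Matrix (Fin M) (Fin Nb) ℂ} {μ : ℝ} (h : IsMutualCoherence A B μ) (i : Fin Na)
    (j : Fin Nb) : ‖colIP A B i j‖ ≤ μ :=
  h.2 ⟨i, j, rfl⟩

theorem IsMutualCoherence.nonneg {M Na Nb : ℕ} {A : Matrix (Fin M) (Fin Na) ℂ}
    {B : Matrix (Fin M) (Fin Nb) ℂ} {μ : ℝ} (h : IsMutualCoherence A B μ) : 0 ≤ μ := by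
  obtain ⟨i, j, rfl⟩ := h.1
  exact norm_nonneg _

theorem IsMutualCoherence.symm {M Na Nb : ℕ} {A : Matrix (Fin M) (Fin Na) ℂ}
    {B : Matrix (Fin M) (Fin Nb) ℂ} {μ : ℝ} (h : IsMutualCoherence A B μ) :
    IsMutualCoherence B A μ := by
  refine ⟨?_, ?_⟩
  · obtain ⟨i, j, rfl⟩ := h.1
    exact ⟨j, i, (norm_colIP_comm A B i j).symm⟩
  · rintro _ ⟨j, i, rfl⟩
    rw [norm_colIP_comm]
    exact h.norm_colIP_le i j

theorem one_sub_mul_density_sub_one_le_div {N : ℕ} {x : Fin N → ℂ} (hx : x ≠ 0) {μ c : ℝ}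
    (h : ‖x‖ - μ * ((∑ i, ‖x i‖) - ‖x‖) ≤ c) : 1 - μ * (density x - 1) ≤ c / ‖x‖ := by
  have hx' : 0 < ‖x‖ := norm_pos_iff.mpr hx
  rw [le_div_iff₀ hx']
  refine Eq.trans_le ?_ h
  rw [density, sub_mul, mul_assoc, sub_mul, div_mul_cancel₀ _ hx'.ne']
  ring

theorem max_one_sub_mul_density_le {M Na Nb : ℕ} {A : Matrix (Fin M) (Fin Na) ℂ}
    {B : Matrix (Fin M) (Fin Nb) ℂ} {μa μm : ℝ} (hA : UnitColumns A) (hμa : IsCoherence A μa)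
    (hμm : IsMutualCoherence A B μm) {x : Fin Na → ℂ} {z : Fin Nb → ℂ} (hx : x ≠ 0)
    (hxz : A *ᵥ x = B *ᵥ z) :
    max (1 - μa * (density x - 1)) 0 ≤ μm * (∑ j, ‖z j‖) / ‖x‖ := by
  have hgram : (Aᴴ * A) *ᵥ x = (Aᴴ * B) *ᵥ z := by
    rw [← mulVec_mulVec, hxz, mulVec_mulVec]
  refine max_le (one_sub_mul_density_sub_one_le_div hx ?_) (by have := hμm.nonneg; positivity)
  exact norm_sub_le_of_mulVec_eq hA (fun _ _ => hμa.norm_colIP_le) hμm.norm_colIP_le hgram hx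

theorem uncertainty_relation {M Na Nb : ℕ} (A : Matrix (Fin M) (Fin Na) ℂ)
    (B : Matrix (Fin M) (Fin Nb) ℂ) (μa μb μm : ℝ)
    (hA : UnitColumns A) (hB : UnitColumns B)
    (hμa : IsCoherence A μa) (hμb : IsCoherence B μb) (hμm : IsMutualCoherence A B μm)
    (x : Fin Na → ℂ) (z : Fin Nb → ℂ) (hx : x ≠ 0) (hz : z ≠ 0)
    (hxz : A.mulVec x = B.mulVec z) :
    max (1 - μa * (density x - 1)) 0 * max (1 - μb * (density z - 1)) 0 ≤
      density x * density z * μm ^ 2 := by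
  calc max (1 - μa * (density x - 1)) 0 * max (1 - μb * (density z - 1)) 0
      ≤ (μm * (∑ j, ‖z j‖) / ‖x‖) * (μm * (∑ i, ‖x i‖) / ‖z‖) :=
        mul_le_mul (max_one_sub_mul_density_le hA hμa hμm hx hxz)
          (max_one_sub_mul_density_le hB hμb hμm.symm hz hxz.symm) (le_max_right _ _)
          (by have := hμm.nonneg; positivity)
    _ = density x * density z * μm ^ 2 := by
        unfold density
        ring
end
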